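/- arXiv:2005.12305 — 3 statements merged into one kernel-verified Lean document; each statement's English description precedes it below -/
import Mathlib

section
/- Let n ≥ 1 and let u, v ∈ ℤ^n have equal coordinate sums. Then h(u − v) = −d(u,v). In particular, for k-element subsets I, J of {1,…,n}, ρ_J(e_I) = −d(e_I, e_J). -/
open Finset

/-- Cyclic successor in `Fin n` (so the index after `n` is `1`). -/
def csucc {n : ℕ} (x : Fin n) : Fin n :=
  ⟨(x.val + 1) % n, Nat.mod_lt _ (Nat.lt_of_le_of_lt (Nat.zero_le _) x.isLt)⟩

/-- The linear functional `L_j(x) = Σ_{r=1}^{n−1} r·x_{j+r}` (subscripts mod `n`). -/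
def Lfun {n : ℕ} (j : Fin n) (x : Fin n → ℝ) : ℝ :=
  ∑ r : Fin n, (r.val : ℝ) * x (j + r)

/-- `h(x) = min_{1 ≤ j ≤ n} L_j(x)`. -/
noncomputable def hfun {n : ℕ} (x : Fin n → ℝ) : ℝ :=
  sInf (Set.range fun j : Fin n => Lfun j x)

/-!
With `x = u - v`, the hypothesis says `x i = t i - t (i - 1)`. Summation by parts around the
cycle gives `L_j(x) = n * t (j - 1) - ∑ t`, so every `L_j(x)` is at least `-∑ t`, with equality
for `j` just after a zero of `t`.
-/

lemma Fin.succ_sub_one_eq_castSucc {m : ℕ} (k : Fin m) : k.succ - 1 = k.castSucc := by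
  ext; simp [Fin.coe_sub_one, Fin.succ_ne_zero]

section

variable {n : ℕ} [NeZero n]

lemma csucc_eq_add_one (j : Fin n) : csucc j = j + 1 := by
  ext
  simp [csucc, Fin.val_add]

lemma sum_mul_ite_sub_ite_csucc {R : Type*} [Ring R] (t : Fin n → R) (i : Fin n) :
    ∑ j, t j * ((if i = j then 1 else 0) - (if i = csucc j then 1 else 0)) = t i - t (i - 1) := by
  have hpred (j : Fin n) : i = j + 1 ↔ j = i - 1 := by rw [eq_sub_iff_add_eq, eq_comm]
  simp [csucc_eq_add_one, hpred, mul_sub, sum_sub_distrib]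

lemma sum_val_mul_sub_sub_one {R : Type*} [CommRing R] (g : Fin n → R) :
    ∑ r : Fin n, (r.val : R) * (g r - g (r - 1)) = n * g (-1) - ∑ r, g r := by
  obtain ⟨m, rfl⟩ := Nat.exists_eq_add_one_of_ne_zero (NeZero.ne n)
  have hpred : ∑ r : Fin (m + 1), (r.val : R) * g (r - 1)
      = ∑ k : Fin m, ((k.val : R) + 1) * g k.castSucc := by
    simp [Fin.sum_univ_succ, Fin.succ_sub_one_eq_castSucc]
  have hlast : (-1 : Fin (m + 1)) = Fin.last m := by simp [neg_eq_iff_eq_neg]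
  simp only [mul_sub, sum_sub_distrib, hpred, Fin.sum_univ_castSucc, Fin.val_castSucc,
    Fin.val_last, add_mul, one_mul, sum_add_distrib, hlast]
  push_cast
  ring

lemma Lfun_sub_comp_sub_one (t : Fin n → ℝ) (j : Fin n) :
    Lfun j (fun i => t i - t (i - 1)) = n * t (j - 1) - ∑ i, t i := by
  have hrot : ∑ r, t (j + r) = ∑ i, t i := Fintype.sum_equiv (Equiv.addLeft j) _ _ fun _ => rfl
  have hshift := sum_val_mul_sub_sub_one fun s => t (j + s)
  simp only [← add_sub_assoc, ← sub_eq_add_neg, hrot] at hshift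
  exact hshift

lemma hfun_sub_comp_sub_one {t : Fin n → ℝ} (ht0 : ∀ j, 0 ≤ t j) (htz : ∃ j, t j = 0) :
    hfun (fun i => t i - t (i - 1)) = -∑ i, t i := by
  refine IsLeast.csInf_eq ⟨?_, ?_⟩
  · obtain ⟨j, hj⟩ := htz
    exact ⟨j + 1, by simp [Lfun_sub_comp_sub_one, hj]⟩
  · rintro _ ⟨j, rfl⟩
    have : (0 : ℝ) ≤ n * t (j - 1) := mul_nonneg n.cast_nonneg (ht0 (j - 1))
    simp only [Lfun_sub_comp_sub_one]
    linarith

end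

theorem stmt3_general {n : ℕ} (u v : Fin n → ℤ)
    (t : Fin n → ℤ) (ht0 : ∀ j, 0 ≤ t j) (htz : ∃ j, t j = 0)
    (ht : ∀ i, u i - v i = ∑ j : Fin n, t j *
      ((if i = j then 1 else 0) - (if i = csucc j then 1 else 0))) :
    hfun (fun i => ((u i - v i : ℤ) : ℝ)) = -(∑ j : Fin n, (t j : ℝ)) := by
  have : NeZero n := ⟨htz.choose.pos.ne'⟩
  have hdiff : (fun i => ((u i - v i : ℤ) : ℝ)) = fun i => (t i : ℝ) - t (i - 1) := by
    funext i
    rw [ht i, sum_mul_ite_sub_ite_csucc]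
    push_cast
    rfl
  rw [hdiff]
  exact hfun_sub_comp_sub_one (fun j => by exact_mod_cast ht0 j)
    (htz.imp fun j hj => by simp [hj])

/-- for `u, v ∈ ℤ^n` with equal coordinate sums, `h(u − v) = −d(u,v)`,
where `d(u,v) = Σ_j t_j` for the (unique) tuple `t` of nonnegative integers with
`min_j t_j = 0` and `u − v = Σ_j t_j (e_j − e_{j+1})`. -/
theorem stmt3 {n : ℕ} (hn : 1 ≤ n) (u v : Fin n → ℤ)
    (huv : ∑ i, u i = ∑ i, v i)
    (t : Fin n → ℤ) (ht0 : ∀ j, 0 ≤ t j) (htz : ∃ j, t j = 0)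
    (ht : ∀ i, u i - v i = ∑ j : Fin n, t j *
      ((if i = j then 1 else 0) - (if i = csucc j then 1 else 0))) :
    hfun (fun i => ((u i - v i : ℤ) : ℝ)) = -(∑ j : Fin n, (t j : ℝ)) :=
  stmt3_general u v t ht0 htz ht
end

section
/- Let 1 ≤ k ≤ n−1 and let J be a frozen k-element subset of {1,…,n}, i.e. J = {i, i+1, …, i+k−1} (mod n) for some i. Then the restriction of ρ_J to the vertices of the hypersimplex Δ_{k,n} is affine: there exist w ∈ ℝ^n and c ∈ ℝ such that ρ_J(e_I) = ⟨w, e_I⟩ + c for every k-element subset I of {1,…,n}. -/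
open Finset

/-- `e_S = Σ_{j ∈ S} e_j`, the indicator vector of a subset `S ⊆ {1,…,n}`. -/
def ind {n : ℕ} (S : Finset (Fin n)) : Fin n → ℝ := fun i => if i ∈ S then 1 else 0

/-- `ρ_J(x) = h(x − e_J)`. -/
noncomputable def rho {n : ℕ} (J : Finset (Fin n)) (x : Fin n → ℝ) : ℝ :=
  hfun (x - ind J)

/-! If `∑ x = 0`, passing from `L_j` to `L_{j+b}` changes the value by `-n` times the sum of `x`
over the cyclic window `j+b, …, j+n-1`. For `x = e_I - e_J` with `J` the cyclic interval that ends
just before `j`, this window meets `J` in `min(k, n-b)` positions, hence in at least as many as it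
meets `I`; so `L_j` attains the minimum `h(x)`, and `ρ_J(e_I) = L_j(e_I) - L_j(e_J)` is linear
in `e_I`. -/

theorem Finset.card_filter_le_le_of_isUpperSet {α : Type*} [LinearOrder α] {S T : Finset α}
    (hT : IsUpperSet (T : Set α)) (hST : #S ≤ #T) (b : α) :
    #{a ∈ S | b ≤ a} ≤ #{a ∈ T | b ≤ a} := by
  by_cases hb : b ∈ T
  · refine card_le_card fun a ha => ?_
    rw [mem_filter] at ha ⊢
    exact ⟨hT ha.2 hb, ha.2⟩
  · have hT_above : {a ∈ T | b ≤ a} = T :=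
      filter_true_of_mem fun t ht => le_of_not_gt fun htb => hb (hT htb.le ht)
    rw [hT_above]
    exact (card_filter_le S _).trans hST

theorem Fin.sum_val_sub_mul {n : ℕ} (y : Fin n → ℝ) (b : Fin n) :
    ∑ a, ((a - b).val : ℝ) * y a
      = ∑ a, (a.val : ℝ) * y a + (n - b.val) * ∑ a, y a - n * ∑ a with b ≤ a, y a := by
  rw [sum_filter, mul_sum, mul_sum, ← sum_add_distrib, ← sum_sub_distrib]
  refine sum_congr rfl fun a _ => ?_
  by_cases hba : b ≤ a
  · rw [Fin.coe_sub_iff_le.2 hba, if_pos hba]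
    push_cast [Nat.cast_sub (Fin.le_def.1 hba)]
    ring
  · rw [Fin.coe_sub_iff_lt.2 (not_le.1 hba), if_neg hba]
    push_cast [Nat.cast_sub (by omega : b.val ≤ n + a.val)]
    ring

section Lfun

variable {n : ℕ}

theorem Lfun_sub (j : Fin n) (x y : Fin n → ℝ) : Lfun j (x - y) = Lfun j x - Lfun j y := by
  simp only [Lfun, Pi.sub_apply, mul_sub, sum_sub_distrib]

theorem Lfun_eq_sum [NeZero n] (j : Fin n) (x : Fin n → ℝ) :
    Lfun j x = ∑ m, ((m - j).val : ℝ) * x m :=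
  Fintype.sum_equiv (Equiv.addLeft j) _ _ fun r => by simp

theorem Lfun_add [NeZero n] (j b : Fin n) (x : Fin n → ℝ) :
    Lfun (j + b) x = Lfun j x + (n - b.val) * ∑ m, x m - n * ∑ a with b ≤ a, x (j + a) := by
  have hshift : Lfun (j + b) x = ∑ a, ((a - b).val : ℝ) * x (j + a) := by
    rw [Lfun_eq_sum, ← Equiv.sum_comp (Equiv.addLeft j)]
    simp only [Equiv.coe_addLeft, add_sub_add_left_eq_sub]
  have hsum : ∑ a, x (j + a) = ∑ m, x m := Equiv.sum_comp (Equiv.addLeft j) x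
  rw [hshift, Fin.sum_val_sub_mul, hsum]
  rfl

theorem hfun_eq_Lfun_of_le {j : Fin n} {x : Fin n → ℝ} (h : ∀ j', Lfun j x ≤ Lfun j' x) :
    hfun x = Lfun j x :=
  IsLeast.csInf_eq ⟨⟨j, rfl⟩, Set.forall_mem_range.2 h⟩

theorem hfun_eq_Lfun_of_sum_filter_nonpos [NeZero n] {j : Fin n} {x : Fin n → ℝ}
    (hx : ∑ m, x m = 0) (hsuffix : ∀ b, ∑ a with b ≤ a, x (j + a) ≤ 0) :
    hfun x = Lfun j x := by
  refine hfun_eq_Lfun_of_le fun j' => ?_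
  rw [← add_sub_cancel j j', Lfun_add, hx]
  nlinarith [hsuffix (j' - j), (Nat.cast_nonneg n : (0 : ℝ) ≤ n)]

theorem sum_filter_ind_sub_ind_nonpos [NeZero n] {I J : Finset (Fin n)} (j : Fin n)
    (hIJ : #I = #J) (hJ : IsUpperSet {a | j + a ∈ J}) (b : Fin n) :
    ∑ a with b ≤ a, (ind I - ind J) (j + a) ≤ 0 := by
  have hcard (S : Finset (Fin n)) : #{a | j + a ∈ S} = #S :=
    card_equiv (Equiv.addLeft j) fun a => by simp
  have hcount (S : Finset (Fin n)) :
      ∑ a with b ≤ a, ind S (j + a) = #{a ∈ {a | j + a ∈ S} | b ≤ a} := by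
    simp only [ind, sum_boole, filter_filter, and_comm]
  rw [Pi.sub_def, sum_sub_distrib, hcount, hcount, sub_nonpos, Nat.cast_le]
  exact card_filter_le_le_of_isUpperSet (by simpa using hJ) (by rw [hcard, hcard, hIJ]) b

end Lfun

theorem Nat.add_mod_lt_iff {n k a : ℕ} (hk : k ≤ n) (ha : a < n) :
    (k + a) % n < k ↔ n ≤ k + a := by
  rcases lt_or_ge (k + a) n with h | h
  · rw [Nat.mod_eq_of_lt h]
    omega
  · rw [Nat.mod_eq_sub_mod h, Nat.mod_eq_of_lt (by omega)]
    omega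

open Fin.NatCast in
theorem isUpperSet_frozen {n k : ℕ} [NeZero n] (hk : k ≤ n) (i : Fin n) :
    IsUpperSet {a : Fin n | i + k + a ∈ (univ.filter fun x => (x - i).val < k)} := by
  have hmem (a : Fin n) :
      i + k + a ∈ (univ.filter fun x => (x - i).val < k) ↔ n ≤ k + a.val := by
    rw [mem_filter, add_assoc, add_sub_cancel_left, Fin.val_add, Fin.val_natCast, Nat.mod_add_mod]
    simpa using Nat.add_mod_lt_iff hk a.isLt
  intro a a' haa' ha
  simp only [Set.mem_ofPred_eq, hmem] at ha ⊢
  exact ha.trans (Nat.add_le_add_left (Fin.le_def.1 haa') k)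

theorem stmt5_general {n k : ℕ}
    (J : Finset (Fin n)) (hJcard : J.card = k)
    (hJfrozen : ∃ i : Fin n, J = univ.filter fun x => (x - i).val < k) :
    ∃ (w : Fin n → ℝ) (c : ℝ), ∀ I : Finset (Fin n), I.card = k →
      rho J (ind I) = (∑ i : Fin n, w i * ind I i) + c := by
  open Fin.NatCast in
  obtain ⟨i, hJ⟩ := hJfrozen
  have : NeZero n := NeZero.of_pos i.pos
  have hkn : k ≤ n := hJcard ▸ (card_le_univ J).trans_eq (Fintype.card_fin n)
  set j : Fin n := i + k
  refine ⟨fun m => ((m - j).val : ℝ), -Lfun j (ind J), fun I hI => ?_⟩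
  have hsum : ∑ m, (ind I - ind J) m = 0 := by
    simp [ind, hI, hJcard]
  have hsuffix := sum_filter_ind_sub_ind_nonpos j (hI.trans hJcard.symm)
    (hJ ▸ isUpperSet_frozen hkn i)
  rw [rho, hfun_eq_Lfun_of_sum_filter_nonpos hsum hsuffix, Lfun_sub, Lfun_eq_sum]
  ring

/-- if `J` is a frozen `k`-subset, i.e. a cyclic interval
`{i, i+1, …, i+k−1} (mod n)`, then the restriction of `ρ_J` to the vertices of
`Δ_{k,n}` is affine: `ρ_J(e_I) = ⟨w, e_I⟩ + c` for all `k`-subsets `I`. -/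
theorem stmt5 {n k : ℕ} (hk1 : 1 ≤ k) (hk2 : k ≤ n - 1)
    (J : Finset (Fin n)) (hJcard : J.card = k)
    (hJfrozen : ∃ i : Fin n, J = univ.filter fun x => (x - i).val < k) :
    ∃ (w : Fin n → ℝ) (c : ℝ), ∀ I : Finset (Fin n), I.card = k →
      rho J (ind I) = (∑ i : Fin n, w i * ind I i) + c :=
  stmt5_general J hJcard hJfrozen
end

section
/- Let 2 ≤ k ≤ n−1, let J be any k-element subset of {1,…,n}, and let L = {ℓ_1 < ℓ_2 < ⋯ < ℓ_d} ⊆ {1,…,n} with 1 ≤ d ≤ k−1. Then in 𝔅^{(L)}: (∂_{ℓ_1} ∘ ∂_{ℓ_2} ∘ ⋯ ∘ ∂_{ℓ_d})(𝓛_J) = 𝓛^{(L)}_{J∖L} if L ⊆ J, and (∂_{ℓ_1} ∘ ⋯ ∘ ∂_{ℓ_d})(𝓛_J) = 0 if L ⊄ J. -/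
/-!
Applying the `∂_ℓ` one at a time (`∂_{ℓ_d}` first), it suffices to show
`∂_j 𝓛^{(L)}_K = 𝓛^{(L ∪ {j})}_{K ∖ {j}}` if `j ∈ K` and `= 0` otherwise. Apply `∂_j` to each
`β^{(L)}_{K_M}`; frozen sets go to frozen sets, so this is compatible with `β_K = 0` for frozen `K`.
A term with `j ∈ K_M` loses `j` and becomes `(K ∖ {j})_M` computed in `S ∖ {j}`. The remaining
terms cancel in pairs: if `m` is the first element of `K ∖ {j}` after `j`, the terms with and
without `m` selected have opposite signs and the same image, since `∂_j` removes `m` in one and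
its predecessor in the other. The one exception is when `j` is an initial point and immediately
precedes `s ∈ K`: then the terms selecting `j` become the terms of `(K ∖ {j})_M` that select `s`,
which has become an initial point of `K ∖ {j}` in `S ∖ {j}`.
-/

open Finset

/-- Cyclic predecessor in `Fin n`. -/
def cpred {n : ℕ} (x : Fin n) : Fin n :=
  ⟨(x.val + (n - 1)) % n, Nat.mod_lt _ (Nat.lt_of_le_of_lt (Nat.zero_le _) x.isLt)⟩

/-- The cyclic interval `[i, j]` in `Fin n`. -/
def cInterval {n : ℕ} (i j : Fin n) : Finset (Fin n) :=
  univ.filter fun x => (x - i).val ≤ (j - i).val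

/-- `K` is frozen in `S` if its elements are consecutive in the cyclic order induced
on `S` from `(1,2,…,n)`, i.e. `K` is the intersection of `S` with a cyclic interval. -/
def FrozenIn {n : ℕ} (S K : Finset (Fin n)) : Prop :=
  ∃ i j : Fin n, K = S ∩ cInterval i j

instance {n : ℕ} (S K : Finset (Fin n)) : Decidable (FrozenIn S K) :=
  inferInstanceAs (Decidable (∃ i j : Fin n, K = S ∩ cInterval i j))

/-- The first element of `K` met when reading `j, j+1, j+2, …` cyclically
(`j` itself if `j ∈ K`); junk value `j` if `K = ∅`. -/
def nextIn {n : ℕ} (K : Finset (Fin n)) (j : Fin n) : Fin n :=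
  if h : (univ.filter fun r : Fin n => j + r ∈ K).Nonempty then
    j + (univ.filter fun r : Fin n => j + r ∈ K).min' h
  else j

/-- The cyclic predecessor of `x` in `S`: the first element of `S` met when reading
`x−1, x−2, …` cyclically; junk value `x` if `S = ∅`. -/
def prevIn {n : ℕ} (S : Finset (Fin n)) (x : Fin n) : Fin n :=
  if h : (univ.filter fun r : Fin n => cpred x - r ∈ S).Nonempty then
    cpred x - (univ.filter fun r : Fin n => cpred x - r ∈ S).min' h
  else x

/-- `∂_j(K) = K ∖ {ℓ}`, where `ℓ = j` if `j ∈ K` and otherwise `ℓ` is the first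
element of `K` met when reading `j+1, j+2, …` cyclically. -/
def bdSet {n : ℕ} (j : Fin n) (K : Finset (Fin n)) : Finset (Fin n) :=
  K.erase (nextIn K j)

/-- The basis vector `β^{(L)}_K` of the space `𝔅^{(L)}` of formal linear
combinations (modelled inside `ℝ^{Finset (Fin n)}`): the indicator of `K` if `K`
is nonfrozen in `S = {1,…,n} ∖ L`, and `0` if `K` is frozen. -/
noncomputable def betaV {n : ℕ} (L K : Finset (Fin n)) : Finset (Fin n) → ℝ :=
  if FrozenIn ((univ : Finset (Fin n)) \ L) K then 0 else Pi.single K 1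

/-- The `S`-initial points of `K`: elements of `K` whose cyclic predecessor in `S`
does not lie in `K`. -/
def initPts {n : ℕ} (S K : Finset (Fin n)) : Finset (Fin n) :=
  K.filter fun i => prevIn S i ∉ K

/-- `𝓛^{(L)}_K = Σ_{M ∈ {0,1}^t} (−1)^{1+|M|} β^{(L)}_{K_M}`, where `K_M` replaces the
chosen `S`-initial points of `K` by their cyclic predecessors in `S = {1,…,n} ∖ L`. -/
noncomputable def LElt {n : ℕ} (L K : Finset (Fin n)) : Finset (Fin n) → ℝ :=
  ∑ T ∈ (initPts ((univ : Finset (Fin n)) \ L) K).powerset,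
    ((-1 : ℝ) ^ (1 + T.card)) •
      betaV L ((K \ T) ∪ T.image (prevIn ((univ : Finset (Fin n)) \ L)))

/-- The boundary map `∂_j : 𝔅^{(L)} → 𝔅^{(L∪{j})}`, the linear extension of
`β^{(L)}_K ↦ β^{(L∪{j})}_{∂_j(K)}`. -/
noncomputable def bdMap {n : ℕ} (L : Finset (Fin n)) (j : Fin n)
    (x : Finset (Fin n) → ℝ) : Finset (Fin n) → ℝ :=
  ∑ K : Finset (Fin n), x K • betaV (insert j L) (bdSet j K)

/-- Iterated boundary maps: `bdComp L [j₁, …, jd] x` applies `∂_{j₁}` first (starting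
from `𝔅^{(L)}`), then `∂_{j₂}`, etc. -/
noncomputable def bdComp {n : ℕ} :
    Finset (Fin n) → List (Fin n) → (Finset (Fin n) → ℝ) → (Finset (Fin n) → ℝ)
  | _, [], x => x
  | L0, j :: js, x => bdComp (insert j L0) js (bdMap L0 j x)

-- `(a - b).val` is the distance from `b` forward to `a` around the cycle `Fin n`.
namespace Fin

variable {n : ℕ}

theorem val_sub_add_val_sub (a b c : Fin n) :
    (a - b).val + (b - c).val = (a - c).val ∨
      (a - b).val + (b - c).val = (a - c).val + n := by
  have : NeZero n := ⟨a.pos.ne'⟩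
  rw [show a - c = (a - b) + (b - c) by abel, Fin.val_add_eq_ite]
  split_ifs <;> omega

theorem val_sub_eq_zero_iff {a b : Fin n} : (a - b).val = 0 ↔ a = b := by
  have : NeZero n := ⟨a.pos.ne'⟩
  rw [Fin.val_eq_zero_iff, sub_eq_zero]

theorem val_sub_pos {a b : Fin n} (h : a ≠ b) : 0 < (a - b).val :=
  Nat.pos_of_ne_zero (val_sub_eq_zero_iff.not.mpr h)

theorem val_sub_add_val_sub_swap {a b : Fin n} (h : a ≠ b) :
    (a - b).val + (b - a).val = n := by
  have := val_sub_add_val_sub a b a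
  have := val_sub_pos h
  have := val_sub_eq_zero_iff.mpr (rfl : a = a)
  omega

theorem eq_of_val_sub_eq_left {a b c : Fin n} (h : (a - c).val = (b - c).val) : a = b :=
  have : NeZero n := ⟨a.pos.ne'⟩
  sub_left_injective (Fin.ext h)

theorem eq_of_val_sub_eq_right {a b c : Fin n} (h : (c - a).val = (c - b).val) : a = b :=
  have : NeZero n := ⟨a.pos.ne'⟩
  sub_right_injective (Fin.ext h)

theorem val_sub_eq_val_sub_one_sub_add_one [NeZero n] {x z : Fin n} (h : z ≠ x) :
    (x - z).val = ((x - 1) - z).val + 1 := by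
  have hxz : x - z ≠ 0 := sub_ne_zero.mpr h.symm
  have h1 : ((x - z) - 1).val = (x - z).val - 1 := Fin.val_sub_one_of_ne_zero hxz
  have h2 := val_sub_pos h.symm
  rw [show x - 1 - z = x - z - 1 by abel, h1]
  omega

theorem val_sub_one_sub_self [NeZero n] (x : Fin n) : ((x - 1) - x).val = n - 1 := by
  obtain ⟨m, rfl⟩ := Nat.exists_eq_succ_of_ne_zero (NeZero.ne n)
  rw [sub_sub_cancel_left, Fin.coe_neg_one]
  rfl

end Fin

section Cyclic

open Fin

variable {n : ℕ}

theorem cpred_eq_sub_one [NeZero n] (x : Fin n) : cpred x = x - 1 := by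
  ext
  rw [Fin.sub_def, cpred]
  simp only [Fin.val_one']
  rcases Nat.lt_or_ge 1 n with h | h
  · rw [Nat.mod_eq_of_lt h, Nat.add_comm]
  · obtain rfl : n = 1 := by have := x.pos; omega
    simp

theorem nextIn_spec {K : Finset (Fin n)} (j : Fin n) (hK : K.Nonempty) :
    nextIn K j ∈ K ∧ ∀ z ∈ K, (nextIn K j - j).val ≤ (z - j).val := by
  obtain ⟨y, hy⟩ := hK
  have : NeZero n := ⟨j.pos.ne'⟩
  have hF : ∀ z, z ∈ K ↔ z - j ∈ univ.filter fun r => j + r ∈ K := by simp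
  have hne : (univ.filter fun r => j + r ∈ K).Nonempty := ⟨_, (hF y).1 hy⟩
  rw [nextIn, dif_pos hne, add_sub_cancel_left]
  exact ⟨(mem_filter.1 (min'_mem _ hne)).2, fun z hz => min'_le _ _ ((hF z).1 hz)⟩

theorem nextIn_eq_of {K : Finset (Fin n)} {j y : Fin n} (hy : y ∈ K)
    (hmin : ∀ z ∈ K, (y - j).val ≤ (z - j).val) : nextIn K j = y := by
  obtain ⟨hmem, hle⟩ := nextIn_spec j ⟨y, hy⟩
  exact eq_of_val_sub_eq_left (le_antisymm (hle y hy) (hmin _ hmem))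

theorem nextIn_of_mem {K : Finset (Fin n)} {j : Fin n} (hj : j ∈ K) : nextIn K j = j :=
  nextIn_eq_of hj fun _ _ => (val_sub_eq_zero_iff.mpr rfl).trans_le (Nat.zero_le _)

theorem prevIn_mem {S : Finset (Fin n)} (x : Fin n) (hS : S.Nonempty) : prevIn S x ∈ S := by
  obtain ⟨y, hy⟩ := hS
  have : NeZero n := ⟨x.pos.ne'⟩
  have hne : (univ.filter fun r => cpred x - r ∈ S).Nonempty :=
    ⟨cpred x - y, by simpa using hy⟩
  rw [prevIn, dif_pos hne]
  exact (mem_filter.1 (min'_mem _ hne)).2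

theorem prevIn_spec {S : Finset (Fin n)} {x : Fin n} (h : ∃ y ∈ S, y ≠ x) :
    prevIn S x ∈ S ∧ prevIn S x ≠ x ∧
      ∀ z ∈ S, z ≠ x → (x - prevIn S x).val ≤ (x - z).val := by
  obtain ⟨y, hyS, hyx⟩ := h
  have : NeZero n := ⟨x.pos.ne'⟩
  have hF : ∀ z, z ∈ S ↔ cpred x - z ∈ univ.filter fun r => cpred x - r ∈ S := by simp
  have hne : (univ.filter fun r => cpred x - r ∈ S).Nonempty := ⟨_, (hF y).1 hyS⟩
  have hmin : ∀ z ∈ S, ((x - 1) - prevIn S x).val ≤ ((x - 1) - z).val := by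
    intro z hz
    have : (cpred x - prevIn S x).val ≤ (cpred x - z).val := by
      rw [prevIn, dif_pos hne, sub_sub_cancel]
      exact min'_le _ _ ((hF z).1 hz)
    rwa [cpred_eq_sub_one] at this
  have hpx : prevIn S x ≠ x := by
    intro he
    have := hmin y hyS
    rw [he] at this
    have := val_sub_add_val_sub (x - 1) x y
    have := val_sub_pos hyx.symm
    have := val_sub_one_sub_self x
    omega
  refine ⟨prevIn_mem x ⟨y, hyS⟩, hpx, fun z hz hzx => ?_⟩
  have := hmin z hz
  rw [val_sub_eq_val_sub_one_sub_add_one hzx, val_sub_eq_val_sub_one_sub_add_one hpx]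
  omega

theorem prevIn_eq_of {S : Finset (Fin n)} {x y : Fin n} (hy : y ∈ S) (hyx : y ≠ x)
    (hmin : ∀ z ∈ S, z ≠ x → (x - y).val ≤ (x - z).val) : prevIn S x = y := by
  obtain ⟨hmem, hne, hle⟩ := prevIn_spec ⟨y, hy, hyx⟩
  exact eq_of_val_sub_eq_right (le_antisymm (hle y hy hyx) (hmin _ hmem hne))

theorem prevIn_injOn (S : Finset (Fin n)) : Set.InjOn (prevIn S) S := by
  intro a ha b hb he
  by_contra hab
  change a ≠ b at hab
  rw [mem_coe] at ha hb
  obtain ⟨-, hqa, hla⟩ := prevIn_spec ⟨b, hb, hab.symm⟩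
  obtain ⟨-, hqb, hlb⟩ := prevIn_spec ⟨a, ha, hab⟩
  rw [← he] at hqb hlb
  have := hla b hb hab.symm
  have := hlb a ha hab
  have := val_sub_add_val_sub a b (prevIn S a)
  have := val_sub_add_val_sub_swap hab
  have := val_sub_pos hqa.symm
  have := val_sub_pos hqb.symm
  omega

theorem val_sub_le_of_prevIn_eq {S : Finset (Fin n)} {s j : Fin n} (hsS : s ∈ S)
    (hsj : s ≠ j) (hps : prevIn S s = j) {z : Fin n} (hzS : z ∈ S) (hzj : z ≠ j) :
    (s - j).val ≤ (z - j).val := by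
  rcases eq_or_ne z s with rfl | hzs
  · rfl
  obtain ⟨-, -, hle⟩ := prevIn_spec ⟨z, hzS, hzs⟩
  have := hps ▸ hle z hzS hzs
  have := val_sub_add_val_sub s z j
  have := val_sub_pos hzj
  omega

theorem prevIn_mem_arc {S : Finset (Fin n)} {i j z : Fin n} (hjS : j ∈ S) (hji : j ≠ i)
    (hzS : z ∈ S) (hzi : z ≠ i) (h : (z - j).val < (i - j).val) :
    (z - j).val ≤ (prevIn S i - j).val ∧ (prevIn S i - j).val < (i - j).val := by
  obtain ⟨-, hqi, hle⟩ := prevIn_spec ⟨j, hjS, hji⟩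
  have := hle z hzS hzi
  have := val_sub_add_val_sub i z j
  have := val_sub_add_val_sub i (prevIn S i) j
  have := val_sub_pos hqi.symm
  omega

theorem prevIn_erase_of_ne {S : Finset (Fin n)} {i j : Fin n} (hjS : j ∈ S) (hij : i ≠ j)
    (hpi : prevIn S i ≠ j) : prevIn (S.erase j) i = prevIn S i := by
  obtain ⟨hmem, hne, hle⟩ := prevIn_spec ⟨j, hjS, hij.symm⟩
  exact prevIn_eq_of (mem_erase.mpr ⟨hpi, hmem⟩) hne
    fun z hz hzi => hle z (mem_of_mem_erase hz) hzi

theorem prevIn_erase_of_eq {S : Finset (Fin n)} {i j : Fin n} (hiS : i ∈ S) (hij : i ≠ j)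
    (hpi : prevIn S i = j) : prevIn (S.erase j) i = prevIn S j := by
  have hjS : j ∈ S := hpi ▸ prevIn_mem i ⟨i, hiS⟩
  obtain ⟨hqS, hqj, hlej⟩ := prevIn_spec ⟨i, hiS, hij⟩
  obtain ⟨-, -, hlei⟩ := prevIn_spec ⟨j, hjS, hij.symm⟩
  rw [hpi] at hlei
  by_cases hthird : ∃ z ∈ S, z ≠ i ∧ z ≠ j
  · obtain ⟨z, hzS, hzi, hzj⟩ := hthird
    have hqi : prevIn S j ≠ i := by
      intro hqi
      have := hqi ▸ hlej z hzS hzj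
      have := hlei z hzS hzi
      have := val_sub_add_val_sub i z j
      have := val_sub_add_val_sub_swap hij
      have := val_sub_add_val_sub_swap hzj
      have := val_sub_pos hzj
      omega
    refine prevIn_eq_of (mem_erase.mpr ⟨hqj, hqS⟩) hqi fun z hz hzi => ?_
    obtain ⟨hzj, hzS⟩ := mem_erase.mp hz
    have := hlej z hzS hzj
    have := hlei z hzS hzi
    have := val_sub_add_val_sub i j z
    have := val_sub_add_val_sub i j (prevIn S j)
    omega
  · push Not at hthird
    have hSi : S.erase j = {i} := by
      ext z
      simp only [mem_erase, mem_singleton]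
      exact ⟨fun ⟨hzj, hzS⟩ => by_contra fun hzi => hzj (hthird z hzS hzi), by
        rintro rfl; exact ⟨hij, hiS⟩⟩
    have hqi : prevIn S j = i := by_contra fun h => hqj (hthird _ hqS h)
    rw [hSi, hqi]
    simpa using prevIn_mem i (singleton_nonempty i)

theorem prevIn_erase {S : Finset (Fin n)} {i j : Fin n} (hiS : i ∈ S) (hjS : j ∈ S)
    (hij : i ≠ j) :
    prevIn (S.erase j) i = if prevIn S i = j then prevIn S j else prevIn S i := by
  split_ifs with hpi
  · exact prevIn_erase_of_eq hiS hij hpi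
  · exact prevIn_erase_of_ne hjS hij hpi

end Cyclic

section Frozen

open Fin

variable {n : ℕ}

theorem mem_cInterval {i j x : Fin n} : x ∈ cInterval i j ↔ (x - i).val ≤ (j - i).val := by
  simp [cInterval]

theorem frozenIn_empty {S : Finset (Fin n)} {c : Fin n} (hc : c ∉ S) : FrozenIn S ∅ := by
  refine ⟨c, c, (eq_empty_of_forall_notMem fun x hx => ?_).symm⟩
  obtain ⟨hxS, hx⟩ := mem_inter.mp hx
  rw [mem_cInterval, val_sub_eq_zero_iff.mpr rfl, Nat.le_zero, val_sub_eq_zero_iff] at hx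
  exact hc (hx ▸ hxS)

theorem FrozenIn.erase {S A : Finset (Fin n)} (h : FrozenIn S A) (j : Fin n) :
    FrozenIn (S.erase j) (A.erase j) := by
  obtain ⟨a, b, rfl⟩ := h
  exact ⟨a, b, by rw [erase_inter]⟩

theorem FrozenIn.exists_left_mem {S A : Finset (Fin n)} (h : FrozenIn S A) (hA : A.Nonempty) :
    ∃ a ∈ A, ∃ b, A = S ∩ cInterval a b := by
  obtain ⟨i, b, rfl⟩ := h
  obtain ⟨a, haA, hamin⟩ := (S ∩ cInterval i b).exists_min_image (fun z => (z - i).val) hA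
  have := mem_cInterval.mp (mem_inter.mp haA).2
  refine ⟨a, haA, b, ?_⟩
  ext z
  simp only [mem_inter, mem_cInterval, and_congr_right_iff]
  intro hzS
  have := val_sub_add_val_sub z a i
  have := val_sub_add_val_sub b a i
  constructor
  · intro hz
    have := hamin z (mem_inter.mpr ⟨hzS, mem_cInterval.mpr hz⟩)
    omega
  · omega

theorem frozenIn_inter_cInterval_erase_left {S : Finset (Fin n)} {c : Fin n} (hc : c ∉ S)
    (a b : Fin n) : FrozenIn S ((S ∩ cInterval a b).erase a) := by
  rcases eq_or_ne b a with rfl | hba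
  · convert frozenIn_empty hc
    refine eq_empty_of_forall_notMem fun x hx => ?_
    simp only [mem_erase, mem_inter] at hx
    obtain ⟨hxa, -, hx⟩ := hx
    rw [mem_cInterval, val_sub_eq_zero_iff.mpr rfl, Nat.le_zero, val_sub_eq_zero_iff] at hx
    exact hxa hx
  have : NeZero n := ⟨a.pos.ne'⟩
  refine ⟨a + 1, b, ?_⟩
  ext x
  simp only [mem_erase, mem_inter, mem_cInterval]
  have hb : (b - (a + 1)).val = (b - a).val - 1 := by
    rw [sub_add_eq_sub_sub]
    exact Fin.val_sub_one_of_ne_zero (sub_ne_zero.mpr hba)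
  have := val_sub_pos hba
  rcases eq_or_ne x a with rfl | hxa
  · have : (x - (x + 1)).val = n - 1 := by
      rw [show x - (x + 1) = (x - 1) - x by abel, val_sub_one_sub_self]
    omega
  · have hx : (x - (a + 1)).val = (x - a).val - 1 := by
      rw [sub_add_eq_sub_sub]
      exact Fin.val_sub_one_of_ne_zero (sub_ne_zero.mpr hxa)
    have := val_sub_pos hxa
    constructor
    · rintro ⟨-, hxS, h⟩; exact ⟨hxS, by omega⟩
    · rintro ⟨hxS, h⟩; exact ⟨hxa, hxS, by omega⟩

theorem FrozenIn.bdSet {S A : Finset (Fin n)} {j : Fin n} (hjS : j ∈ S) (h : FrozenIn S A) :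
    FrozenIn (S.erase j) (bdSet j A) := by
  rcases A.eq_empty_or_nonempty with rfl | hA
  · rw [_root_.bdSet, erase_empty]
    exact frozenIn_empty (notMem_erase j S)
  by_cases hjA : j ∈ A
  · rw [_root_.bdSet, nextIn_of_mem hjA]
    exact h.erase j
  obtain ⟨a, haA, b, rfl⟩ := h.exists_left_mem hA
  have hja : j ∉ cInterval a b := fun hj => hjA (mem_inter.mpr ⟨hjS, hj⟩)
  have hnext : nextIn (S ∩ cInterval a b) j = a := by
    refine nextIn_eq_of haA fun z hz => ?_
    have hz := mem_cInterval.mp (mem_inter.mp hz).2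
    have hja := mem_cInterval.not.mp hja
    have := val_sub_add_val_sub z a j
    have := val_sub_add_val_sub_swap (ne_of_mem_of_not_mem haA hjA).symm
    omega
  have hS : S ∩ cInterval a b = S.erase j ∩ cInterval a b := by
    rw [erase_inter, erase_eq_of_notMem (fun hj => hjA hj)]
  rw [_root_.bdSet, hnext, hS]
  exact frozenIn_inter_cInterval_erase_left (notMem_erase j S) a b

end Frozen

section SignedSum

variable {α M : Type*} [AddCommGroup M] [Module ℝ M]

noncomputable def signedSum (I : Finset α) (f : Finset α → M) : M :=
  ∑ T ∈ I.powerset, (-1 : ℝ) ^ (1 + T.card) • f T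

theorem signedSum_empty (f : Finset α → M) : signedSum ∅ f = -f ∅ := by
  simp [signedSum]

theorem signedSum_insert [DecidableEq α] {I : Finset α} {a : α} (ha : a ∉ I) (f : Finset α → M) :
    signedSum (insert a I) f = signedSum I f - signedSum I fun T => f (insert a T) := by
  rw [signedSum, sum_powerset_insert ha, signedSum, signedSum, sub_eq_add_neg, ← sum_neg_distrib]
  congr 1
  refine sum_congr rfl fun T hT => ?_
  rw [card_insert_of_notMem fun h => ha (mem_powerset.mp hT h), ← add_assoc, pow_succ,
    mul_neg_one, neg_smul]

theorem signedSum_congr {I : Finset α} {f g : Finset α → M} (h : ∀ T ⊆ I, f T = g T) :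
    signedSum I f = signedSum I g :=
  sum_congr rfl fun T hT => by rw [h T (mem_powerset.mp hT)]

theorem signedSum_eq_zero [DecidableEq α] {I : Finset α} {m : α} (hm : m ∈ I) {f : Finset α → M}
    (h : ∀ T ⊆ I.erase m, f (insert m T) = f T) : signedSum I f = 0 := by
  rw [← insert_erase hm, signedSum_insert (notMem_erase m I), sub_eq_zero]
  exact signedSum_congr fun T hT => (h T hT).symm

theorem map_signedSum {N : Type*} [AddCommGroup N] [Module ℝ N] (φ : M →ₗ[ℝ] N)
    (I : Finset α) (f : Finset α → M) : φ (signedSum I f) = signedSum I fun T => φ (f T) := by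
  simp only [signedSum, map_sum, map_smul]

end SignedSum

section BoundaryMap

variable {n : ℕ}

theorem betaV_of_frozenIn {L K : Finset (Fin n)} (h : FrozenIn (univ \ L) K) :
    betaV L K = 0 :=
  if_pos h

theorem betaV_empty {L : Finset (Fin n)} {c : Fin n} (hc : c ∈ L) :
    betaV L ∅ = 0 :=
  betaV_of_frozenIn (frozenIn_empty (c := c) (by simp [hc]))

theorem bdMap_eq_linearCombination (L : Finset (Fin n)) (j : Fin n) :
    bdMap L j = Fintype.linearCombination ℝ fun K => betaV (insert j L) (bdSet j K) :=
  funext fun x => (Fintype.linearCombination_apply ℝ _ x).symm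

theorem bdMap_betaV {L : Finset (Fin n)} {j : Fin n} (hjL : j ∉ L) (A : Finset (Fin n)) :
    bdMap L j (betaV L A) = betaV (insert j L) (bdSet j A) := by
  rw [bdMap_eq_linearCombination]
  by_cases h : FrozenIn (univ \ L) A
  · have hjS : j ∈ univ \ L := by simpa using hjL
    rw [betaV_of_frozenIn h, map_zero, betaV_of_frozenIn (by rw [sdiff_insert]; exact h.bdSet hjS)]
  · rw [betaV, if_neg h, Fintype.linearCombination_apply_single, one_smul]

theorem bdComp_zero (js : List (Fin n)) (L : Finset (Fin n)) : bdComp L js 0 = 0 := by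
  induction js generalizing L with
  | nil => rfl
  | cons j js ih =>
    rw [bdComp, bdMap_eq_linearCombination, map_zero, ih]

end BoundaryMap

section Shift

open Fin

variable {n : ℕ} {S K T : Finset (Fin n)} {j : Fin n}

/-- The set `K_M` of the paper, where `T ⊆ initPts S K` is the set of initial points selected
by `M`. -/
def shiftSet (S K T : Finset (Fin n)) : Finset (Fin n) :=
  K \ T ∪ T.image (prevIn S)

theorem LElt_eq_signedSum (L K : Finset (Fin n)) :
    LElt L K = signedSum (initPts (univ \ L) K) fun T => betaV L (shiftSet (univ \ L) K T) :=
  rfl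

theorem mem_shiftSet {z : Fin n} :
    z ∈ shiftSet S K T ↔ (z ∈ K ∧ z ∉ T) ∨ ∃ i ∈ T, prevIn S i = z := by
  simp [shiftSet]

theorem mem_initPts {i : Fin n} : i ∈ initPts S K ↔ i ∈ K ∧ prevIn S i ∉ K :=
  mem_filter

def IsFirstAfter (K : Finset (Fin n)) (j m : Fin n) : Prop :=
  m ∈ K ∧ m ≠ j ∧ ∀ z ∈ K, z ≠ j → (m - j).val ≤ (z - j).val

theorem isFirstAfter_nextIn_erase (hK : (K.erase j).Nonempty) :
    IsFirstAfter K j (nextIn (K.erase j) j) := by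
  obtain ⟨hmem, hle⟩ := nextIn_spec j hK
  obtain ⟨hne, hmK⟩ := mem_erase.mp hmem
  exact ⟨hmK, hne, fun z hz hzj => hle z (mem_erase.mpr ⟨hzj, hz⟩)⟩

theorem isFirstAfter_of_prevIn_eq {s : Fin n} (hKS : K ⊆ S) (hsK : s ∈ K) (hsj : s ≠ j)
    (hps : prevIn S s = j) : IsFirstAfter K j s :=
  ⟨hsK, hsj, fun _ hz hzj => val_sub_le_of_prevIn_eq (hKS hsK) hsj hps (hKS hz) hzj⟩

theorem mem_initPts_of_isFirstAfter {m : Fin n} (hjS : j ∈ S) (hm : IsFirstAfter K j m)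
    (hpm : prevIn S m = j → j ∉ K) : m ∈ initPts S K := by
  obtain ⟨hmK, hjm, hmin⟩ := hm
  replace hjm := hjm.symm
  refine mem_initPts.mpr ⟨hmK, fun hpK => ?_⟩
  have hpj : prevIn S m ≠ j := fun h => hpm h (h ▸ hpK)
  have := hmin _ hpK hpj
  have := (prevIn_mem_arc hjS hjm hjS hjm (by
    rw [val_sub_eq_zero_iff.mpr rfl]; exact val_sub_pos hjm.symm)).2
  omega

theorem nextIn_shiftSet {m : Fin n} (hKS : K ⊆ S) (hjS : j ∈ S) (hT : T ⊆ initPts S K)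
    (hm : IsFirstAfter K j m) (hjT : j ∈ K → j ∈ T) :
    nextIn (shiftSet S K T) j = if m ∈ T then prevIn S m else m := by
  obtain ⟨hmK, hjm, hmin⟩ := hm
  replace hjm := hjm.symm
  have hKT : ∀ z ∈ K, z ∉ T → (m - j).val ≤ (z - j).val :=
    fun z hz hzT => hmin z hz fun hzj => hzT (hzj ▸ hjT (hzj ▸ hz))
  have hprev : ∀ i ∈ T, i ≠ m → (m - j).val ≤ (prevIn S i - j).val := by
    intro i hi him
    rcases eq_or_ne i j with rfl | hij
    · obtain ⟨-, hq, hle⟩ := prevIn_spec ⟨m, hKS hmK, hjm.symm⟩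
      have := hle m (hKS hmK) hjm.symm
      have := val_sub_add_val_sub_swap hjm.symm
      have := val_sub_add_val_sub_swap hq
      omega
    · have := hmin i (mem_initPts.mp (hT hi)).1 hij
      have : (m - j).val ≠ (i - j).val := fun h => him (eq_of_val_sub_eq_left h).symm
      exact (prevIn_mem_arc hjS hij.symm (hKS hmK) him.symm (by omega)).1
  have hpm : (prevIn S m - j).val < (m - j).val :=
    (prevIn_mem_arc hjS hjm hjS hjm (by
      rw [val_sub_eq_zero_iff.mpr rfl]; exact val_sub_pos hjm.symm)).2
  split_ifs with hmT
  · refine nextIn_eq_of (mem_shiftSet.mpr (Or.inr ⟨m, hmT, rfl⟩)) fun z hz => ?_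
    rcases mem_shiftSet.mp hz with ⟨hzK, hzT⟩ | ⟨i, hiT, rfl⟩
    · have := hKT z hzK hzT
      omega
    · rcases eq_or_ne i m with rfl | him
      · rfl
      · have := hprev i hiT him
        omega
  · refine nextIn_eq_of (mem_shiftSet.mpr (Or.inl ⟨hmK, hmT⟩)) fun z hz => ?_
    rcases mem_shiftSet.mp hz with ⟨hzK, hzT⟩ | ⟨i, hiT, rfl⟩
    · exact hKT z hzK hzT
    · exact hprev i hiT (ne_of_mem_of_not_mem hiT hmT)

-- `∂_j` removes `m` on the right and its predecessor, which replaced `m`, on the left.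
theorem bdSet_shiftSet_insert_of_isFirstAfter {m : Fin n} (hKS : K ⊆ S) (hjS : j ∈ S)
    (hT : T ⊆ initPts S K) (hm : IsFirstAfter K j m) (hmI : m ∈ initPts S K) (hmT : m ∉ T)
    (hjT : j ∈ K → j ∈ T) :
    bdSet j (shiftSet S K (insert m T)) = bdSet j (shiftSet S K T) := by
  obtain ⟨hmK, hpm⟩ := mem_initPts.mp hmI
  rw [bdSet, bdSet, nextIn_shiftSet hKS hjS (insert_subset hmI hT) hm
      (fun h => mem_insert_of_mem (hjT h)), nextIn_shiftSet hKS hjS hT hm hjT,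
    if_pos (mem_insert_self m T), if_neg hmT]
  have hpT : ∀ i ∈ T, prevIn S i ∉ K := fun i hi => (mem_initPts.mp (hT hi)).2
  have hinj : ∀ i ∈ T, prevIn S i ≠ prevIn S m := fun i hi =>
    (prevIn_injOn S).ne (hKS (mem_initPts.mp (hT hi)).1) (hKS hmK) (ne_of_mem_of_not_mem hi hmT)
  ext z
  simp only [mem_erase, mem_shiftSet, mem_insert]
  grind

theorem prevIn_erase_of_mem_initPts (hKS : K ⊆ S) (hjK : j ∈ K) {i : Fin n}
    (hi : i ∈ initPts S K) (hij : i ≠ j) : prevIn (S.erase j) i = prevIn S i :=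
  prevIn_erase_of_ne (hKS hjK) hij fun h => (mem_initPts.mp hi).2 (h ▸ hjK)

theorem bdSet_shiftSet_of_mem (hKS : K ⊆ S) (hjK : j ∈ K) (hT : T ⊆ initPts S K)
    (hjT : j ∉ T) : bdSet j (shiftSet S K T) = shiftSet (S.erase j) (K.erase j) T := by
  rw [bdSet, nextIn_of_mem (mem_shiftSet.mpr (Or.inl ⟨hjK, hjT⟩))]
  have hpT : ∀ i ∈ T, prevIn S i ∉ K := fun i hi => (mem_initPts.mp (hT hi)).2
  have hprev : ∀ i ∈ T, prevIn (S.erase j) i = prevIn S i := fun i hi =>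
    prevIn_erase_of_mem_initPts hKS hjK (hT hi) (ne_of_mem_of_not_mem hi hjT)
  ext z
  simp only [mem_erase, mem_shiftSet]
  grind

-- In `S ∖ {j}` the predecessor of `s` is that of `j`, so selecting `s` there does what
-- selecting `j` did in `S`.
theorem bdSet_shiftSet_insert_of_prevIn_eq {s : Fin n} (hKS : K ⊆ S) (hjI : j ∈ initPts S K)
    (hsK : s ∈ K) (hsj : s ≠ j) (hps : prevIn S s = j) (hT : T ⊆ initPts S K) (hjT : j ∉ T) :
    bdSet j (shiftSet S K (insert j T)) = shiftSet (S.erase j) (K.erase j) (insert s T) := by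
  obtain ⟨hjK, hpj⟩ := mem_initPts.mp hjI
  have hsT : s ∉ T := fun h => (mem_initPts.mp (hT h)).2 (hps ▸ hjK)
  rw [bdSet, nextIn_shiftSet hKS (hKS hjK) (insert_subset hjI hT)
    (isFirstAfter_of_prevIn_eq hKS hsK hsj hps)
    (fun _ => mem_insert_self j T), if_neg (by simp [hsj, hsT])]
  have hps' : prevIn (S.erase j) s = prevIn S j := prevIn_erase_of_eq (hKS hsK) hsj hps
  have hpT : ∀ i ∈ T, prevIn S i ∉ K := fun i hi => (mem_initPts.mp (hT hi)).2
  have hprev : ∀ i ∈ T, prevIn (S.erase j) i = prevIn S i := fun i hi =>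
    prevIn_erase_of_mem_initPts hKS hjK (hT hi) (ne_of_mem_of_not_mem hi hjT)
  ext z
  simp only [mem_erase, mem_shiftSet, mem_insert]
  grind

end Shift

section Step

variable {n : ℕ} {S K : Finset (Fin n)} {j : Fin n}

theorem mem_initPts_erase_iff (hKS : K ⊆ S) (hjK : j ∈ K) {i : Fin n} (hiK : i ∈ K)
    (hij : i ≠ j) :
    i ∈ initPts (S.erase j) (K.erase j) ↔
      if prevIn S i = j then prevIn S j ∉ K else prevIn S i ∉ K := by
  rw [mem_initPts, prevIn_erase (hKS hiK) (hKS hjK) hij]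
  split_ifs with hpi
  · have hpj : prevIn S j ≠ j := (prevIn_spec ⟨i, hKS hiK, hij⟩).2.1
    simp [hij, hiK, hpj]
  · simp [hij, hiK, hpi]

theorem initPts_erase_eq_erase (hKS : K ⊆ S) (hjK : j ∈ K)
    (h : ∀ i ∈ K, i ≠ j → prevIn S i = j → prevIn S j ∈ K) :
    initPts (S.erase j) (K.erase j) = (initPts S K).erase j := by
  ext i
  rcases eq_or_ne i j with rfl | hij
  · simp [mem_initPts]
  by_cases hiK : i ∈ K
  · rw [mem_initPts_erase_iff hKS hjK hiK hij, mem_erase, mem_initPts]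
    split_ifs with hpi
    · simp [h i hiK hij hpi, hpi, hjK]
    · simp [hij, hiK]
  · simp [mem_initPts, hiK]

theorem initPts_erase_eq_insert (hKS : K ⊆ S) (hjK : j ∈ K) (hpj : prevIn S j ∉ K)
    {s : Fin n} (hsK : s ∈ K) (hsj : s ≠ j) (hps : prevIn S s = j) :
    initPts (S.erase j) (K.erase j) = insert s ((initPts S K).erase j) := by
  ext i
  rcases eq_or_ne i j with rfl | hij
  · simp [mem_initPts, hsj.symm]
  by_cases hiK : i ∈ K
  · rw [mem_initPts_erase_iff hKS hjK hiK hij, mem_insert, mem_erase, mem_initPts]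
    split_ifs with hpi
    · have his : i = s := prevIn_injOn S (hKS hiK) (hKS hsK) (hpi.trans hps.symm)
      simp [his, hpj]
    · have his : i ≠ s := fun his => hpi (his ▸ hps)
      simp [his, hij, hiK]
  · have his : i ≠ s := fun his => hiK (his ▸ hsK)
    simp [mem_initPts, hiK, his]

variable {M : Type*} [AddCommGroup M] [Module ℝ M]

theorem signedSum_bdSet_shiftSet_of_notMem (hKS : K ⊆ S) (hjS : j ∈ S) (hjK : j ∉ K)
    (v : Finset (Fin n) → M) (hv : v ∅ = 0) :
    signedSum (initPts S K) (fun T => v (bdSet j (shiftSet S K T))) = 0 := by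
  rcases K.eq_empty_or_nonempty with rfl | hK
  · simp [initPts, signedSum_empty, shiftSet, bdSet, hv]
  have hm := isFirstAfter_nextIn_erase (by rwa [erase_eq_of_notMem hjK])
  have hmI := mem_initPts_of_isFirstAfter hjS hm fun _ => hjK
  refine signedSum_eq_zero hmI fun T hT => congrArg v ?_
  exact bdSet_shiftSet_insert_of_isFirstAfter hKS hjS (hT.trans (erase_subset _ _)) hm hmI
    (fun h => notMem_erase _ _ (hT h)) fun h => absurd h hjK

theorem bdSet_singleton (j a : Fin n) : bdSet j {a} = ∅ := by
  rw [bdSet, mem_singleton.mp (nextIn_spec j (singleton_nonempty a)).1, erase_singleton]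

theorem signedSum_bdSet_shiftSet_insert_self (hKS : K ⊆ S) (hjI : j ∈ initPts S K)
    (hfirst : ∀ i ∈ K, i ≠ j → prevIn S i ≠ j) (v : Finset (Fin n) → M) (hv : v ∅ = 0) :
    signedSum ((initPts S K).erase j) (fun T => v (bdSet j (shiftSet S K (insert j T)))) = 0 := by
  obtain ⟨hjK, hpj⟩ := mem_initPts.mp hjI
  have hjS := hKS hjK
  rcases (K.erase j).eq_empty_or_nonempty with hK | hK
  · have hI : (initPts S K).erase j = ∅ :=
      subset_empty.mp (hK ▸ erase_subset_erase j (filter_subset _ K))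
    have hshift : shiftSet S K {j} = {prevIn S j} := by
      rw [shiftSet, sdiff_singleton_eq_erase, hK, image_singleton, empty_union]
    rw [hI, signedSum_empty, insert_empty_eq, hshift, bdSet_singleton, hv, neg_zero]
  have hm := isFirstAfter_nextIn_erase hK
  have hmI := mem_initPts_of_isFirstAfter hjS hm fun h => absurd h (hfirst _ hm.1 hm.2.1)
  refine signedSum_eq_zero (mem_erase.mpr ⟨hm.2.1, hmI⟩) fun T hT => congrArg v ?_
  have hT' : T ⊆ initPts S K := hT.trans ((erase_subset _ _).trans (erase_subset _ _))
  have hmT : nextIn (K.erase j) j ∉ insert j T := by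
    simpa [hm.2.1] using fun h => notMem_erase _ _ (hT h)
  rw [insert_comm]
  exact bdSet_shiftSet_insert_of_isFirstAfter hKS hjS (insert_subset hjI hT') hm hmI hmT
    fun _ => mem_insert_self j T

theorem signedSum_bdSet_shiftSet_of_mem (hKS : K ⊆ S) (hjK : j ∈ K) (v : Finset (Fin n) → M)
    (hv : v ∅ = 0) :
    signedSum (initPts S K) (fun T => v (bdSet j (shiftSet S K T))) =
      signedSum (initPts (S.erase j) (K.erase j))
        fun T => v (shiftSet (S.erase j) (K.erase j) T) := by
  have hterm : ∀ T ⊆ initPts S K, j ∉ T →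
      v (bdSet j (shiftSet S K T)) = v (shiftSet (S.erase j) (K.erase j) T) :=
    fun T hT hjT => congrArg v (bdSet_shiftSet_of_mem hKS hjK hT hjT)
  by_cases hjI : j ∈ initPts S K
  swap
  · have hpj : prevIn S j ∈ K := by simpa [mem_initPts, hjK] using hjI
    rw [initPts_erase_eq_erase hKS hjK fun _ _ _ _ => hpj, erase_eq_of_notMem hjI]
    exact signedSum_congr fun T hT => hterm T hT fun h => hjI (hT h)
  have hterm' : ∀ T ⊆ (initPts S K).erase j,
      v (bdSet j (shiftSet S K T)) = v (shiftSet (S.erase j) (K.erase j) T) :=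
    fun T hT => hterm T (hT.trans (erase_subset _ _)) fun h => notMem_erase _ _ (hT h)
  rw [← insert_erase hjI, signedSum_insert (notMem_erase _ _)]
  by_cases hs : ∃ s ∈ K, s ≠ j ∧ prevIn S s = j
  · obtain ⟨s, hsK, hsj, hps⟩ := hs
    have hsI : s ∉ (initPts S K).erase j :=
      fun h => (mem_initPts.mp (mem_of_mem_erase h)).2 (hps ▸ hjK)
    rw [initPts_erase_eq_insert hKS hjK (mem_initPts.mp hjI).2 hsK hsj hps,
      signedSum_insert hsI, signedSum_congr hterm']
    congr 1
    refine signedSum_congr fun T hT => congrArg v ?_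
    exact bdSet_shiftSet_insert_of_prevIn_eq hKS hjI hsK hsj hps
      (hT.trans (erase_subset _ _)) fun h => notMem_erase _ _ (hT h)
  · push Not at hs
    rw [initPts_erase_eq_erase hKS hjK fun i hiK hij hpi => absurd hpi (hs i hiK hij),
      signedSum_bdSet_shiftSet_insert_self hKS hjI hs v hv, sub_zero]
    exact signedSum_congr hterm'

theorem bdMap_LElt {L K : Finset (Fin n)} (hjL : j ∉ L) (hKL : Disjoint K L) :
    bdMap L j (LElt L K) = if j ∈ K then LElt (insert j L) (K.erase j) else 0 := by
  rw [LElt_eq_signedSum, bdMap_eq_linearCombination, map_signedSum]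
  simp only [← bdMap_eq_linearCombination, bdMap_betaV hjL]
  have hKS : K ⊆ univ \ L := subset_sdiff.mpr ⟨subset_univ K, hKL⟩
  have hv : betaV (insert j L) ∅ = 0 := betaV_empty (mem_insert_self j L)
  split_ifs with hjK
  · rw [signedSum_bdSet_shiftSet_of_mem hKS hjK _ hv, ← sdiff_insert]
    rfl
  · exact signedSum_bdSet_shiftSet_of_notMem hKS (by simpa using hjL) hjK _ hv

theorem bdComp_LElt (js : List (Fin n)) (hjs : js.Nodup) (L K : Finset (Fin n))
    (hjsL : Disjoint js.toFinset L) (hKL : Disjoint K L) :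
    bdComp L js (LElt L K) =
      if js.toFinset ⊆ K then LElt (L ∪ js.toFinset) (K \ js.toFinset) else 0 := by
  induction js generalizing L K with
  | nil => simp [bdComp]
  | cons j js ih =>
    obtain ⟨hj, hjs⟩ := List.nodup_cons.mp hjs
    have hjL : j ∉ L := disjoint_left.mp hjsL (by simp)
    rw [bdComp, bdMap_LElt hjL hKL]
    by_cases hjK : j ∈ K
    · have hjsL' : Disjoint js.toFinset (insert j L) :=
        disjoint_insert_right.mpr ⟨by simpa using hj, hjsL.mono_left (by simp)⟩
      have hKL' : Disjoint (K.erase j) (insert j L) :=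
        disjoint_insert_right.mpr ⟨notMem_erase j K, hKL.mono_left (erase_subset j K)⟩
      have hsub : js.toFinset ⊆ K.erase j ↔ (j :: js).toFinset ⊆ K := by
        simp [insert_subset_iff, subset_erase, hjK, hj]
      have hL : insert j L ∪ js.toFinset = L ∪ (j :: js).toFinset := by
        rw [List.toFinset_cons, insert_union, union_insert]
      have hK : K.erase j \ js.toFinset = K \ (j :: js).toFinset := by
        rw [List.toFinset_cons, sdiff_insert, erase_sdiff_comm]
      rw [if_pos hjK, ih hjs (insert j L) (K.erase j) hjsL' hKL', hL, hK]
      exact if_congr hsub rfl rfl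
    · rw [if_neg hjK, bdComp_zero, if_neg fun h => hjK (h (by simp))]

end Step

theorem stmt13_general {n : ℕ}
    (J : Finset (Fin n))
    (L : Finset (Fin n)) :
    bdComp ∅ ((L.sort (· ≤ ·)).reverse) (LElt ∅ J) =
      if L ⊆ J then LElt L (J \ L) else 0 := by
  have hL : ((L.sort (· ≤ ·)).reverse).toFinset = L := by
    rw [List.toFinset_reverse, sort_toFinset]
  have h := bdComp_LElt _ (List.nodup_reverse.mpr (L.sort_nodup (· ≤ ·))) ∅ J
    (disjoint_empty_right _) (disjoint_empty_right _)
  rwa [hL, empty_union] at h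

/-- for a `k`-subset `J` and `L = {ℓ_1 < ⋯ < ℓ_d}` with `1 ≤ d ≤ k−1`:
`(∂_{ℓ_1} ∘ ⋯ ∘ ∂_{ℓ_d})(𝓛_J) = 𝓛^{(L)}_{J∖L}` if `L ⊆ J`, and `= 0` otherwise.
(The composition applies `∂_{ℓ_d}` first, so the list of indices is reversed.) -/
theorem stmt13 {n k : ℕ} (hk : 2 ≤ k) (hkn : k ≤ n - 1)
    (J : Finset (Fin n)) (hJ : J.card = k)
    (L : Finset (Fin n)) (hd1 : 1 ≤ L.card) (hd2 : L.card ≤ k - 1) :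
    bdComp ∅ ((L.sort (· ≤ ·)).reverse) (LElt ∅ J) =
      if L ⊆ J then LElt L (J \ L) else 0 :=
  stmt13_general J L
end
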